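/- Let w be a cyclically reduced word of length m over Σ_k, and let Γ̃_w be its directed labeled cycle graph. Suppose a component C of the pair-graph Υ corresponds to a non-coherent maximal repetition of a subword u, with v_x the end of one appearance of u and v_y the beginning of the other, and write w_x (the cyclic shift of w starting after v_x) as a_0 b_0 where a_0 runs from v_x to v_y. Then the first letter of b_0 equals the inverse of its last letter, and in particular the first letter of b_0 differs from the first letter of a_0. -/

import Mathlib

/-- A letter `g_i^{±1}` of the alphabet `Σ_k`. -/
abbrev Letter (k : ℕ) := Fin k × Bool

/-- The inverse letter: `(g_i^{α})⁻¹ = g_i^{-α}`. -/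
def Letter.inv {k : ℕ} (x : Letter k) : Letter k := (x.1, !x.2)

/-- `w` is cyclically reduced: no two cyclically consecutive letters are mutually inverse. -/
def CyclicallyReduced {k : ℕ} (w : List (Letter k)) : Prop :=
  ∀ i : Fin w.length,
    w.get ⟨((i : ℕ) + 1) % w.length, Nat.mod_lt _ i.pos⟩ ≠ Letter.inv (w.get i)

/-! Both appearances of `u` put the head `c` of `u` at the front of `b₀` and `c⁻¹` at its end.
Since `b₀` ends the word `wx`, cyclic reducedness at the wrap-around from the last letter `c⁻¹`
to the first letter (the head of `a₀`) forbids that first letter from being `c`. -/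

@[simp]
theorem Letter.inv_inv {k : ℕ} (x : Letter k) : Letter.inv (Letter.inv x) = x := by
  simp [Letter.inv]

theorem List.getLast?_append_map_reverse {α β : Type*} (f : α → β) (l : List β) {u : List α}
    (hu : u ≠ []) : (l ++ (u.reverse.map f)).getLast? = u.head?.map f := by
  rw [List.getLast?_append_of_ne_nil _ (by simpa using hu), List.map_reverse,
    List.getLast?_reverse, List.head?_map]

theorem CyclicallyReduced.head_ne_inv_getLast {k : ℕ} {w : List (Letter k)}
    (hw : CyclicallyReduced w) {x y : Letter k} (hx : x ∈ w.head?) (hy : y ∈ w.getLast?) :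
    x ≠ Letter.inv y := by
  have hpos : 0 < w.length := List.length_pos_of_mem (List.mem_of_mem_head? hx)
  have hwrap : (w.length - 1 + 1) % w.length = 0 := by
    rw [Nat.sub_add_cancel hpos, Nat.mod_self]
  have hfirst : w[0] = x := by
    simpa [List.head?_eq_getElem?, List.getElem?_eq_getElem hpos] using hx
  have hlast : w[w.length - 1] = y := by
    simpa [List.getLast?_eq_getElem?, List.getElem?_eq_getElem (by omega : w.length - 1 < w.length)]
      using hy
  have hclose := hw ⟨w.length - 1, by omega⟩
  simp only [List.get_eq_getElem, hwrap, hfirst, hlast] at hclose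
  exact hclose

theorem stmt18_general {k : ℕ} (wx a0 b0 u r : List (Letter k))
    (hcyc : CyclicallyReduced wx) (hwx : wx = a0 ++ b0)
    (hu : u ≠ [])
    (hb0 : b0 = u ++ r ++ (u.reverse.map Letter.inv)) :
    (∀ x ∈ b0.head?, ∀ y ∈ b0.getLast?, x = Letter.inv y) ∧
    (∀ x ∈ b0.head?, ∀ y ∈ a0.head?, x ≠ y) := by
  obtain ⟨c, u', rfl⟩ := List.exists_cons_of_ne_nil hu
  have hhead : b0.head? = some c := by simp [hb0]
  have hlast : b0.getLast? = some (Letter.inv c) := by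
    simpa [hb0] using List.getLast?_append_map_reverse Letter.inv (c :: u' ++ r) hu
  simp only [hhead, hlast, Option.mem_def, Option.some.injEq, forall_eq', Letter.inv_inv,
    true_and]
  intro y hy
  have hwx_head : y ∈ wx.head? := hwx ▸ List.mem_head?_append_of_mem_head? hy
  have hwx_last : Letter.inv c ∈ wx.getLast? := by
    simp [hwx, List.getLast?_append, hlast]
  simpa [eq_comm] using hcyc.head_ne_inv_getLast hwx_head hwx_last

/-- Suppose the cyclically reduced word `wx` (a cyclic shift of `w` starting right
after `v_x`) factors as `wx = a₀ ++ b₀` with `a₀` nonempty, where `b₀` begins with one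
appearance of a non-coherent repetition and ends with the other:
`b₀ = u ++ r ++ u⁻¹` with `u` nonempty. Then the first letter of `b₀` equals the
inverse of its last letter, and in particular the first letter of `b₀` differs from
the first letter of `a₀`. -/
theorem stmt18 {k : ℕ} (wx a0 b0 u r : List (Letter k))
    (hcyc : CyclicallyReduced wx) (hwx : wx = a0 ++ b0)
    (ha0 : a0 ≠ []) (hu : u ≠ [])
    (hb0 : b0 = u ++ r ++ (u.reverse.map Letter.inv)) :
    (∀ x ∈ b0.head?, ∀ y ∈ b0.getLast?, x = Letter.inv y) ∧
    (∀ x ∈ b0.head?, ∀ y ∈ a0.head?, x ≠ y) :=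
  stmt18_general wx a0 b0 u r hcyc hwx hu hb0
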